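/- Let λ > 1, u(t) = (arccosh(λt) − arccosh(λ))/λ, v(t) = √(λ² − 1) − √(λ² − t²), and w(t) = ∂_λ(v(t) − u(t)). Then w(1) = 0, w'(1) = 0, and w''(t) < 0 for all t ∈ (1/λ, λ); consequently w(t) ≤ 0 on (1/λ, λ). -/

import Mathlib

/-!
With `g = λ² - t²` and `h = λ²t² - 1`, differentiating the closed forms of `∂_λ v` and `∂_λ u`
twice in `t` gives `w'' = -λ(λ² + 2t²) g^(-5/2) - λt(λ²t² + 2) h^(-5/2)`, which is negative on
`(1/λ, λ)`. So `w` is concave there, and since `w'(1) = 0` the point `t = 1` is its maximum,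
where `w(1) = 0`.
-/

open Real

/-- The inverse hyperbolic cosine. -/
noncomputable def arccosh (x : ℝ) : ℝ := Real.log (x + Real.sqrt (x ^ 2 - 1))

-- `arccosh` is Mathlib's `Real.arcosh` by definition.
lemma hasDerivAt_arccosh {x : ℝ} (hx : 1 < x) : HasDerivAt arccosh (√(x ^ 2 - 1))⁻¹ x :=
  Real.hasDerivAt_arcosh hx

lemma HasDerivAt.mul_sqrt_self {g : ℝ → ℝ} {g' x : ℝ} (hg : HasDerivAt g g' x) (hx : 0 < g x) :
    HasDerivAt (fun y => g y * √(g y)) (3 / 2 * g' * √(g x)) x := by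
  refine (hg.mul (hg.sqrt hx.ne')).congr_deriv ?_
  field_simp
  rw [sq_sqrt hx.le]
  ring

-- Closed forms of `∂_λ v(t)` (sphere profile) and `∂_λ u(t)` (catenary profile).
noncomputable def sphereLamDeriv (lam t : ℝ) : ℝ :=
  lam / √(lam ^ 2 - 1) - lam / √(lam ^ 2 - t ^ 2)

noncomputable def catenaryLamDeriv (lam t : ℝ) : ℝ :=
  (arccosh lam - arccosh (lam * t) + lam * t / √(lam ^ 2 * t ^ 2 - 1) - lam / √(lam ^ 2 - 1))
    / lam ^ 2

section
variable {lam t : ℝ}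

lemma hasDerivAt_sphere_lam (hlam : 1 < lam ^ 2) (ht : t ^ 2 < lam ^ 2) :
    HasDerivAt (fun mu => √(mu ^ 2 - 1) - √(mu ^ 2 - t ^ 2)) (sphereLamDeriv lam t) lam := by
  have h1 : HasDerivAt (fun mu : ℝ => mu ^ 2 - 1) (2 * lam) lam := by
    simpa using (hasDerivAt_pow 2 lam).sub_const 1
  have h2 : HasDerivAt (fun mu : ℝ => mu ^ 2 - t ^ 2) (2 * lam) lam := by
    simpa using (hasDerivAt_pow 2 lam).sub_const (t ^ 2)
  refine ((h1.sqrt (by linarith)).sub (h2.sqrt (by linarith))).congr_deriv ?_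
  rw [sphereLamDeriv]
  field_simp

lemma hasDerivAt_catenary_lam (hlam : 1 < lam) (ht : 1 < lam * t) :
    HasDerivAt (fun mu => (arccosh (mu * t) - arccosh mu) / mu) (catenaryLamDeriv lam t) lam := by
  have h1 := (hasDerivAt_arccosh ht).comp lam (hasDerivAt_mul_const t)
  have h2 := ((h1.sub (hasDerivAt_arccosh hlam)).div (hasDerivAt_id lam) (by positivity))
  refine h2.congr_deriv ?_
  rw [catenaryLamDeriv, mul_pow]
  simp only [Function.comp_apply, Pi.sub_apply, id]
  field_simp
  ring

lemma hasDerivAt_sphereLamDeriv (ht : t ^ 2 < lam ^ 2) :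
    HasDerivAt (sphereLamDeriv lam) (-(lam * t) / ((lam ^ 2 - t ^ 2) * √(lam ^ 2 - t ^ 2))) t := by
  have hg : HasDerivAt (fun x : ℝ => lam ^ 2 - x ^ 2) (-(2 * t)) t := by
    simpa using (hasDerivAt_pow 2 t).const_sub (lam ^ 2)
  have hpos : 0 < lam ^ 2 - t ^ 2 := by linarith
  have hs : 0 < √(lam ^ 2 - t ^ 2) := by positivity
  refine ((hasDerivAt_const t _).sub ((hasDerivAt_const t lam).div (hg.sqrt hpos.ne')
    hs.ne')).congr_deriv ?_
  field_simp
  rw [sq_sqrt hpos.le]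
  ring

lemma hasDerivAt_sphereLamDeriv_deriv (ht : t ^ 2 < lam ^ 2) :
    HasDerivAt (fun x => -(lam * x) / ((lam ^ 2 - x ^ 2) * √(lam ^ 2 - x ^ 2)))
      (-(lam * (lam ^ 2 + 2 * t ^ 2)) / ((lam ^ 2 - t ^ 2) ^ 2 * √(lam ^ 2 - t ^ 2))) t := by
  have hg : HasDerivAt (fun x : ℝ => lam ^ 2 - x ^ 2) (-(2 * t)) t := by
    simpa using (hasDerivAt_pow 2 t).const_sub (lam ^ 2)
  have hpos : 0 < lam ^ 2 - t ^ 2 := by linarith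
  have hn : HasDerivAt (fun x => -(lam * x)) (-(lam * 1)) t :=
    ((hasDerivAt_id' t).const_mul lam).neg
  refine (hn.div (hg.mul_sqrt_self hpos) (by positivity)).congr_deriv ?_
  field_simp
  ring

lemma hasDerivAt_catenaryLamDeriv (ht : 1 < lam * t) :
    HasDerivAt (catenaryLamDeriv lam)
      (-(lam * t ^ 2) / ((lam ^ 2 * t ^ 2 - 1) * √(lam ^ 2 * t ^ 2 - 1))) t := by
  have hh : HasDerivAt (fun x : ℝ => lam ^ 2 * x ^ 2 - 1) (lam ^ 2 * (2 * t)) t := by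
    simpa using ((hasDerivAt_pow 2 t).const_mul (lam ^ 2)).sub_const 1
  have hpos : 0 < lam ^ 2 * t ^ 2 - 1 := by nlinarith
  have hs : 0 < √(lam ^ 2 * t ^ 2 - 1) := by positivity
  have ha := (hasDerivAt_arccosh ht).comp t ((hasDerivAt_id t).const_mul lam)
  have hq := ((hasDerivAt_id t).const_mul lam).div (hh.sqrt hpos.ne') hs.ne'
  have hlam : lam ≠ 0 := by rintro rfl; linarith
  refine (((((hasDerivAt_const t _).sub ha).add hq).sub (hasDerivAt_const t _)).div_const
    _).congr_deriv ?_
  rw [mul_pow]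
  simp only [id]
  field_simp
  rw [sq_sqrt hpos.le]
  ring

lemma hasDerivAt_catenaryLamDeriv_deriv (ht : 1 < lam * t) :
    HasDerivAt (fun x => -(lam * x ^ 2) / ((lam ^ 2 * x ^ 2 - 1) * √(lam ^ 2 * x ^ 2 - 1)))
      (lam * t * (lam ^ 2 * t ^ 2 + 2) / ((lam ^ 2 * t ^ 2 - 1) ^ 2 * √(lam ^ 2 * t ^ 2 - 1)))
      t := by
  have hh : HasDerivAt (fun x : ℝ => lam ^ 2 * x ^ 2 - 1) (lam ^ 2 * (2 * t)) t := by
    simpa using ((hasDerivAt_pow 2 t).const_mul (lam ^ 2)).sub_const 1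
  have hpos : 0 < lam ^ 2 * t ^ 2 - 1 := by nlinarith
  have hn : HasDerivAt (fun x => -(lam * x ^ 2)) (-(lam * (↑2 * t ^ (2 - 1)))) t :=
    ((hasDerivAt_pow 2 t).const_mul lam).neg
  refine (hn.div (hh.mul_sqrt_self hpos) (by positivity)).congr_deriv ?_
  field_simp
  norm_num
  ring

end

lemma sphereLamDeriv_one (lam : ℝ) : sphereLamDeriv lam 1 = 0 := by
  simp [sphereLamDeriv]

lemma catenaryLamDeriv_one (lam : ℝ) : catenaryLamDeriv lam 1 = 0 := by
  simp [catenaryLamDeriv]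

lemma sphere_sub_catenary_deriv2_neg {lam t : ℝ} (hlam : 0 < lam) (ht : 1 < lam * t)
    (ht' : t ^ 2 < lam ^ 2) :
    -(lam * (lam ^ 2 + 2 * t ^ 2)) / ((lam ^ 2 - t ^ 2) ^ 2 * √(lam ^ 2 - t ^ 2))
      - lam * t * (lam ^ 2 * t ^ 2 + 2) / ((lam ^ 2 * t ^ 2 - 1) ^ 2 * √(lam ^ 2 * t ^ 2 - 1))
      < 0 := by
  have ht0 : 0 < t := pos_of_mul_pos_right (one_pos.trans ht) hlam.le
  have hg : 0 < lam ^ 2 - t ^ 2 := by linarith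
  have hh : 0 < lam ^ 2 * t ^ 2 - 1 := by nlinarith
  rw [neg_div, neg_sub_left, neg_lt_zero]
  positivity

lemma Set.EqOn.hasDerivAt_of_isOpen {𝕜 F : Type*} [NontriviallyNormedField 𝕜]
    [NormedAddCommGroup F] [NormedSpace 𝕜 F] {f g : 𝕜 → F} {s : Set 𝕜} {x : 𝕜} {g' : F}
    (hfg : Set.EqOn f g s) (hs : IsOpen s) (hx : x ∈ s) (hg : HasDerivAt g g' x) :
    HasDerivAt f g' x :=
  hg.congr_of_eventuallyEq (hfg.eventuallyEq_of_mem (hs.mem_nhds hx))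

lemma ConcaveOn.isMaxOn_of_hasDerivAt_eq_zero {S : Set ℝ} {f : ℝ → ℝ} {a : ℝ}
    (hf : ConcaveOn ℝ S f) (ha : a ∈ interior S) (hfa : HasDerivAt f 0 a) : IsMaxOn f S a := by
  have := hf.neg.isMinOn_of_rightDeriv_eq_zero ha <| by
    simpa using hfa.neg.hasDerivWithinAt.derivWithin (uniqueDiffWithinAt_Ioi a)
  exact fun x hx => by simpa using this hx

/-- The λ-derivative `w = ∂_λ(v − u)` of the difference of the sphere and catenary
profiles vanishes to first order at `t = 1`, is strictly concave on `(1/λ, λ)`,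
and hence is nonpositive there. -/
theorem lambda_derivative_difference_nonpos (lam : ℝ) (hlam : 1 < lam)
    (U V : ℝ → ℝ → ℝ) (w : ℝ → ℝ)
    (hU : ∀ mu t, U mu t = (arccosh (mu * t) - arccosh mu) / mu)
    (hV : ∀ mu t, V mu t = Real.sqrt (mu ^ 2 - 1) - Real.sqrt (mu ^ 2 - t ^ 2))
    (hw : ∀ t, w t = deriv (fun mu => V mu t - U mu t) lam) :
    w 1 = 0 ∧ deriv w 1 = 0 ∧
    (∀ t ∈ Set.Ioo (1 / lam) lam, deriv (deriv w) t < 0) ∧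
    (∀ t ∈ Set.Ioo (1 / lam) lam, w t ≤ 0) := by
  set I := Set.Ioo (1 / lam) lam
  have hlam0 : 0 < lam := by linarith
  have hI : ∀ t ∈ I, 1 < lam * t ∧ t ^ 2 < lam ^ 2 := fun t ⟨h₁, h₂⟩ => by
    have : 1 < lam * t := by rwa [div_lt_iff₀ hlam0, mul_comm] at h₁
    exact ⟨this, by nlinarith⟩
  have h1 : (1 : ℝ) ∈ I := ⟨(div_lt_one hlam0).2 hlam, hlam⟩
  have hw_eq : Set.EqOn w (fun t => sphereLamDeriv lam t - catenaryLamDeriv lam t) I :=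
    fun t ht => by
      simp only [hw, hU, hV]
      exact ((hasDerivAt_sphere_lam (by nlinarith) (hI t ht).2).sub
        (hasDerivAt_catenary_lam hlam (hI t ht).1)).deriv
  have hw' := fun t ht => hw_eq.hasDerivAt_of_isOpen isOpen_Ioo ht
    ((hasDerivAt_sphereLamDeriv (hI t ht).2).sub (hasDerivAt_catenaryLamDeriv (hI t ht).1))
  have hdw_eq : Set.EqOn (deriv w) _ I := fun t ht => (hw' t ht).deriv
  have hdw' := fun t ht => hdw_eq.hasDerivAt_of_isOpen isOpen_Ioo ht
    ((hasDerivAt_sphereLamDeriv_deriv (hI t ht).2).sub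
      (hasDerivAt_catenaryLamDeriv_deriv (hI t ht).1))
  have hd2w : ∀ t ∈ I, deriv (deriv w) t < 0 := fun t ht => by
    rw [(hdw' t ht).deriv]
    exact sphere_sub_catenary_deriv2_neg hlam0 (hI t ht).1 (hI t ht).2
  have hw1 : w 1 = 0 := by simp [hw_eq h1, sphereLamDeriv_one, catenaryLamDeriv_one]
  refine ⟨hw1, by simp [hdw_eq h1], hd2w, fun t ht => ?_⟩
  have hconcave : ConcaveOn ℝ I w :=
    (strictConcaveOn_of_deriv2_neg (convex_Ioo _ _)
      (fun t ht => (hw' t ht).continuousAt.continuousWithinAt)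
      (fun t ht => hd2w t (interior_subset ht))).concaveOn
  have hmax : IsMaxOn w I 1 :=
    hconcave.isMaxOn_of_hasDerivAt_eq_zero (by rwa [interior_Ioo]) (by simpa using hw' 1 h1)
  exact hw1 ▸ hmax ht
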